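/- arXiv:2605.17820 — 2 statements merged into one kernel-verified Lean document; each statement's English description precedes it below -/
import Mathlib

section
/- The Hermite functions satisfy the scaling-derivative identity d/dβ [H_k^β(v)] = -(√((k+1)(k+2))/(2β)) H_{k+2}^β(v) + (√(k(k-1))/(2β)) H_{k-2}^β(v), where H_k^β(v) = √β · π^{-1/4} (2^k k!)^{-1/2} H_k(βv) e^{-β²v²/2} and terms with negative index are zero. -/
/-- Physicists' Hermite polynomial `H_k(x) = (-1)^k e^{x²} dᵏ/dxᵏ e^{-x²}`. -/
noncomputable def physHermite (k : ℕ) (x : ℝ) : ℝ :=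
  (-1) ^ k * Real.exp (x ^ 2) * iteratedDeriv k (fun y => Real.exp (-y ^ 2)) x

/-- Symmetrically weighted Hermite function
`H_k^β(v) = √β π^{-1/4} (2^k k!)^{-1/2} H_k(βv) e^{-β²v²/2}`. -/
noncomputable def swHermite (k : ℕ) (β v : ℝ) : ℝ :=
  Real.sqrt β * Real.pi ^ (-(1 : ℝ) / 4) * (Real.sqrt (2 ^ k * (Nat.factorial k)))⁻¹ *
    physHermite k (β * v) * Real.exp (-(β ^ 2 * v ^ 2) / 2)

noncomputable def Hp : ℕ → ℝ → ℝ
  | 0, _ => 1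
  | 1, x => 2 * x
  | (k+2), x => 2 * x * Hp (k+1) x - 2 * ((k : ℝ) + 1) * Hp k x

lemma Hp_rec (k : ℕ) (x : ℝ) :
    Hp (k+1) x = 2 * x * Hp k x - 2 * (k : ℝ) * Hp (k-1) x := by
  match k with
  | 0 => simp [Hp]
  | m+1 => simp [Hp]

lemma Hp_hasDerivAt_aux (k : ℕ) :
    (∀ x, HasDerivAt (Hp k) (2 * (k : ℝ) * Hp (k-1) x) x) ∧
      (∀ x, HasDerivAt (Hp (k+1)) (2 * ((k : ℝ) + 1) * Hp k x) x) := by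
  induction k with
  | zero =>
    constructor
    · intro x; simpa [Hp] using (hasDerivAt_const x (1:ℝ))
    · intro x
      have : HasDerivAt (fun x : ℝ => 2 * x) 2 x := by
        simpa using (hasDerivAt_id x).const_mul 2
      simpa [Hp] using this
  | succ m ih =>
    constructor
    · intro x
      have := ih.2 x
      convert this using 2
      · push_cast; ring
      · simp
    · intro x
      have ha : HasDerivAt (fun y : ℝ => 2 * y * Hp (m+1) y)
          (2 * Hp (m+1) x + 2 * x * (2 * ((m:ℝ)+1) * Hp m x)) x := by
        have h2 : HasDerivAt (fun y : ℝ => 2 * y) 2 x := by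
          simpa using (hasDerivAt_id x).const_mul 2
        have := h2.mul (ih.2 x)
        exact this
        try ring
      have hb : HasDerivAt (fun y : ℝ => 2 * ((m:ℝ)+1) * Hp m y)
          (2 * ((m:ℝ)+1) * (2 * (m:ℝ) * Hp (m-1) x)) x := (ih.1 x).const_mul _
      have hc := ha.sub hb
      have heq : 2 * Hp (m+1) x + 2 * x * (2 * ((m:ℝ)+1) * Hp m x)
            - 2 * ((m:ℝ)+1) * (2 * (m:ℝ) * Hp (m-1) x)
          = 2 * ((m:ℝ)+2) * Hp (m+1) x := by
        have h := Hp_rec m x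
        nlinarith [h]
      have hd : HasDerivAt (fun y : ℝ => 2 * y * Hp (m+1) y - 2 * ((m:ℝ)+1) * Hp m y)
          (2 * ((m:ℝ)+2) * Hp (m+1) x) x := heq ▸ hc
      have hfun : (Hp (m+2)) = fun y : ℝ => 2 * y * Hp (m+1) y - 2 * ((m:ℝ)+1) * Hp m y := by
        funext y; simp [Hp]
      rw [hfun]
      convert hd using 2
      push_cast; ring

lemma Hp_hasDerivAt (k : ℕ) (x : ℝ) :
    HasDerivAt (Hp k) (2 * (k : ℝ) * Hp (k-1) x) x := (Hp_hasDerivAt_aux k).1 x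

lemma physHermite_eq (k : ℕ) : physHermite k = Hp k := by
  induction k with
  | zero =>
    funext x
    simp [physHermite, Hp, iteratedDeriv_zero, ← Real.exp_add]
  | succ m ih =>
    funext x
    have h1 : ∀ y : ℝ, Real.exp (-y^2) * Real.exp (y^2) = 1 := by
      intro y; rw [← Real.exp_add]; simp
    have h2 : ((-1:ℝ))^m * (-1)^m = 1 := by
      rw [← pow_add, ← two_mul, pow_mul]; norm_num
    have hD : iteratedDeriv m (fun y => Real.exp (-y ^ 2))
        = fun y => (-1) ^ m * (Real.exp (-y ^ 2) * Hp m y) := by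
      funext y
      have h := congrFun ih y
      unfold physHermite at h
      calc iteratedDeriv m (fun y => Real.exp (-y ^ 2)) y
          = ((-1:ℝ)^m * (-1)^m) * (Real.exp (-y^2) * Real.exp (y^2))
            * iteratedDeriv m (fun y => Real.exp (-y ^ 2)) y := by rw [h1, h2]; ring
        _ = (-1)^m * Real.exp (-y^2)
            * ((-1)^m * Real.exp (y^2) * iteratedDeriv m (fun y => Real.exp (-y ^ 2)) y) := by
            ring
        _ = (-1) ^ m * (Real.exp (-y ^ 2) * Hp m y) := by rw [h]; ring
    have hexp : HasDerivAt (fun y : ℝ => Real.exp (-y^2)) (-(2*x) * Real.exp (-x^2)) x := by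
      have hi : HasDerivAt (fun y : ℝ => -y^2) (-(2*x)) x := by
        exact (hasDerivAt_pow 2 x).neg.congr_deriv (by norm_num)
      simpa [mul_comm] using hi.exp
    have hHp := Hp_hasDerivAt m x
    have hprod : HasDerivAt (fun y : ℝ => (-1:ℝ)^m * (Real.exp (-y^2) * Hp m y))
        ((-1:ℝ)^m * ((-(2*x) * Real.exp (-x^2)) * Hp m x
          + Real.exp (-x^2) * (2 * (m:ℝ) * Hp (m-1) x))) x :=
      (hexp.mul hHp).const_mul _
    have hderiv : deriv (iteratedDeriv m (fun y => Real.exp (-y ^ 2))) x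
        = (-1:ℝ)^m * ((-(2*x) * Real.exp (-x^2)) * Hp m x
          + Real.exp (-x^2) * (2 * (m:ℝ) * Hp (m-1) x)) := by
      rw [hD]; exact hprod.deriv
    show (-1) ^ (m+1) * Real.exp (x ^ 2) * iteratedDeriv (m+1) (fun y => Real.exp (-y ^ 2)) x
        = Hp (m+1) x
    rw [iteratedDeriv_succ, hderiv, Hp_rec m x]
    have h3 : ((-1:ℝ))^(m+1) * (-1)^m = -1 := by
      rw [pow_succ, mul_comm ((-1:ℝ)^m), mul_assoc, h2]; ring
    calc (-1:ℝ) ^ (m+1) * Real.exp (x ^ 2) * ((-1:ℝ)^m * ((-(2*x) * Real.exp (-x^2)) * Hp m x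
          + Real.exp (-x^2) * (2 * (m:ℝ) * Hp (m-1) x)))
        = ((-1:ℝ)^(m+1) * (-1)^m) * ((Real.exp (-x^2) * Real.exp (x^2)))
          * ((-(2*x)) * Hp m x + 2 * (m:ℝ) * Hp (m-1) x) := by ring
      _ = 2 * x * Hp m x - 2 * (m:ℝ) * Hp (m-1) x := by rw [h1, h3]; ring

lemma Hp_key (k : ℕ) (x : ℝ) :
    Hp k x + 4*(k:ℝ)*x*Hp (k-1) x - 2*x^2*Hp k x
      = -(1/2) * Hp (k+2) x + 2*(k:ℝ)*((k:ℝ)-1)*Hp (k-2) x := by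
  match k with
  | 0 => simp [Hp]; ring
  | 1 => simp [Hp]; ring
  | m+2 => simp [Hp]; push_cast; ring

lemma sfac (k : ℕ) :
    (Real.sqrt (2 ^ (k+2) * (Nat.factorial (k+2))))⁻¹
      = (Real.sqrt (2 ^ k * (Nat.factorial k)))⁻¹
        / (2 * Real.sqrt (((k:ℝ)+1) * ((k:ℝ)+2))) := by
  have hA : (0:ℝ) < ((k:ℝ)+1) * ((k:ℝ)+2) := by positivity
  have h4 : Real.sqrt 4 = 2 := by
    rw [show (4:ℝ) = 2^2 by norm_num, Real.sqrt_sq (by norm_num)]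
  have harg : (2:ℝ) ^ (k+2) * ((Nat.factorial (k+2)) : ℝ)
      = (((k:ℝ)+1) * ((k:ℝ)+2)) * (4 * (2 ^ k * ((Nat.factorial k) : ℝ))) := by
    push_cast [Nat.factorial_succ]
    ring
  rw [harg, Real.sqrt_mul hA.le, Real.sqrt_mul (by norm_num : (0:ℝ) ≤ 4), h4]
  have hAs : Real.sqrt (((k:ℝ)+1) * ((k:ℝ)+2)) ≠ 0 :=
    Real.sqrt_ne_zero'.mpr hA
  have hBs : Real.sqrt (2 ^ k * ((Nat.factorial k) : ℝ)) ≠ 0 :=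
    Real.sqrt_ne_zero'.mpr (by positivity)
  field_simp

lemma coefC (k : ℕ) :
    Real.sqrt ((k:ℝ) * ((k:ℝ)-1)) * (Real.sqrt (2 ^ (k-2) * (Nat.factorial (k-2))))⁻¹
      = 2*(k:ℝ)*((k:ℝ)-1) * (Real.sqrt (2 ^ k * (Nat.factorial k)))⁻¹ := by
  match k with
  | 0 => norm_num
  | 1 => norm_num
  | m+2 =>
    have hA : (0:ℝ) < ((m:ℝ)+1) * ((m:ℝ)+2) := by positivity
    have hAs : Real.sqrt (((m:ℝ)+1) * ((m:ℝ)+2)) ≠ 0 := Real.sqrt_ne_zero'.mpr hA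
    have hself : Real.sqrt (((m:ℝ)+1) * ((m:ℝ)+2)) * Real.sqrt (((m:ℝ)+1) * ((m:ℝ)+2))
        = ((m:ℝ)+1) * ((m:ℝ)+2) := Real.mul_self_sqrt hA.le
    have hidx : (m + 2 - 2 : ℕ) = m := rfl
    rw [hidx, sfac m]
    push_cast
    rw [show ((m:ℝ)+2) * (((m:ℝ)+2)-1) = ((m:ℝ)+1) * ((m:ℝ)+2) from by ring]
    set a := Real.sqrt (((m:ℝ)+1) * ((m:ℝ)+2)) with ha
    set b := (Real.sqrt (2 ^ m * (Nat.factorial m)))⁻¹ with hb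
    rw [div_eq_mul_inv, mul_inv, ← mul_assoc]
    rw [mul_comm] at hself
    field_simp [hAs]
    linear_combination ((Real.sqrt (2 ^ m * ((Nat.factorial m):ℝ)))⁻¹) * hself

/-- Scaling-derivative identity for the SW Hermite functions; for `k < 2` the
coefficient `√(k(k-1))` vanishes, so the ℕ-subtraction index `k - 2` is harmless. -/
theorem swHermite_deriv_scaling (k : ℕ) (β v : ℝ) (hβ : 0 < β) :
    HasDerivAt (fun b => swHermite k b v)
      (-(Real.sqrt (((k : ℝ) + 1) * ((k : ℝ) + 2)) / (2 * β)) * swHermite (k + 2) β v +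
        (Real.sqrt ((k : ℝ) * ((k : ℝ) - 1)) / (2 * β)) * swHermite (k - 2) β v) β := by
  set c : ℝ := Real.pi ^ (-(1 : ℝ) / 4) with hc
  set s : ℝ := (Real.sqrt (2 ^ k * (Nat.factorial k)))⁻¹ with hs
  have h1 : HasDerivAt Real.sqrt (1 / (2 * Real.sqrt β)) β := Real.hasDerivAt_sqrt hβ.ne'
  have h2 : HasDerivAt (fun b => Hp k (b * v)) (2 * (k:ℝ) * Hp (k-1) (β*v) * v) β := by
    have hin : HasDerivAt (fun b : ℝ => b * v) v β := by
      simpa using (hasDerivAt_id β).mul_const v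
    exact (Hp_hasDerivAt k (β*v)).comp β hin
  have h3 : HasDerivAt (fun b : ℝ => Real.exp (-(b ^ 2 * v ^ 2) / 2))
      (-(β * v ^ 2) * Real.exp (-(β ^ 2 * v ^ 2) / 2)) β := by
    have hin : HasDerivAt (fun b : ℝ => -(b ^ 2 * v ^ 2) / 2) (-(β * v ^ 2)) β := by
      have := (((hasDerivAt_pow 2 β).mul_const (v ^ 2)).neg).div_const 2
      refine this.congr_deriv (Eq.symm ?_)
      ring
    simpa [mul_comm] using hin.exp
  have htot := (((h1.mul_const c).mul_const s).mul h2).mul h3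
  have hfun : (fun b => swHermite k b v)
      = fun b => Real.sqrt b * c * s * Hp k (b * v) * Real.exp (-(b ^ 2 * v ^ 2) / 2) := by
    funext b
    simp only [swHermite, physHermite_eq, hc, hs]
  rw [hfun]
  refine htot.congr_deriv (Eq.symm ?_)
  simp only [swHermite, physHermite_eq, hc, hs, sfac k, Pi.mul_apply]
  have hb : Real.sqrt β * Real.sqrt β = β := Real.mul_self_sqrt hβ.le
  have hkey := Hp_key k (β*v)
  have hcoef := coefC k
  set S := Real.sqrt β with hS
  set E := Real.exp (-(β ^ 2 * v ^ 2) / 2) with hE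
  have hS0 : S ≠ 0 := by positivity
  have ha0 : Real.sqrt (((k:ℝ)+1) * ((k:ℝ)+2)) ≠ 0 :=
    Real.sqrt_ne_zero'.mpr (by positivity)
  set a := Real.sqrt (((k:ℝ)+1) * ((k:ℝ)+2)) with haa
  have hai : a * a⁻¹ = 1 := mul_inv_cancel₀ ha0
  have hbi : β * β⁻¹ = 1 := mul_inv_cancel₀ hβ.ne'
  have hST : S * S⁻¹ = 1 := mul_inv_cancel₀ hS0
  linear_combination (-(S * c * s * E / (2*β))) * hkey
    + (S * c * E / (2*β)) * Hp (k-2) (β*v) * hcoef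
    + (c * s * E * Hp k (β*v) / (2*β*S)) * hb
    + (-(1/4) * β⁻¹ * S * c * s * Hp (k+2) (β*v) * E) * hai
    + (2*(k:ℝ)*v*S*c*s*E*Hp (k-1) (β*v) - β*S*c*s*E*Hp k (β*v)*v^2
        + (1/2)*c*s*E*Hp k (β*v)*S⁻¹) * hbi
    + (-(1/2)*c*s*E*Hp k (β*v)*β⁻¹*S) * hST
end

section
/- Let h_l(s) = ∫_ℝ H_l^{b(s)}(v) f(v) dv with b(s) = β (β'/β)^s, where f is a finite linear combination of SW Hermite functions and H_l^b are SW Hermite functions. Then h_l satisfies the ODE dh_l/ds = (ln(β'/β)/2)(√(l(l-1)) h_{l-2} - √((l+1)(l+2)) h_{l+2}), with h_{-1} = h_{-2} = 0. -/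
open Polynomial Real MeasureTheory

/-- Physicists' Hermite polynomials via recurrence. -/
noncomputable def pH : ℕ → Polynomial ℝ
  | 0 => 1
  | (k+1) => C 2 * X * pH k - derivative (pH k)

lemma pH_succ (k : ℕ) : pH (k+1) = C 2 * X * pH k - derivative (pH k) := rfl

lemma derivative_pH : ∀ (k : ℕ), derivative (pH (k+1)) = C (2*((k:ℝ)+1)) * pH k := by
  intro k
  induction k with
  | zero => simp [pH]
  | succ n ih =>
    have h2 : C ((2:ℝ)*((n:ℝ)+1+1)) = C ((2:ℝ)*((n:ℝ)+1)) + C 2 := by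
      rw [← C_add]; ring_nf
    rw [pH_succ (n+1), ih, derivative_sub, derivative_mul, derivative_mul,
      derivative_C, derivative_X, derivative_mul, derivative_C, ih, pH_succ n]
    push_cast
    rw [h2]
    ring

lemma pH_zero : pH 0 = 1 := rfl
lemma pH_one : pH 1 = C 2 * X := by simp [pH]
lemma pH_two_eval (x : ℝ) : (pH 2).eval x = 4*x^2 - 2 := by
  rw [pH_succ, pH_one]; simp [derivative_mul]; ring
lemma pH_three_eval (x : ℝ) : (pH 3).eval x = 8*x^3 - 12*x := by
  rw [pH_succ 2, pH_succ 1, pH_one]; simp [derivative_mul]; ring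

/-- three-term recurrence at eval level -/
lemma pH_mulX (j : ℕ) (x : ℝ) :
    x * (pH (j+1)).eval x = 1/2 * (pH (j+2)).eval x + ((j:ℝ)+1) * (pH j).eval x := by
  have h := pH_succ (j+1)
  rw [derivative_pH j] at h
  have := congrArg (eval x) h
  simp only [eval_sub, eval_mul, eval_C, eval_X] at this
  linarith [this]

lemma pH_key (k : ℕ) (x : ℝ) :
    1/2 * (pH k).eval x + x * ((derivative (pH k)).eval x) - x^2 * (pH k).eval x
      = ((k*(k-1) : ℕ) : ℝ) * (pH (k-2)).eval x - 1/4 * (pH (k+2)).eval x := by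
  match k with
  | 0 =>
    simp [pH_zero, pH_two_eval]; ring
  | 1 =>
    simp [pH_one, pH_three_eval, derivative_mul]; ring
  | (m+2) =>
    have hd : (derivative (pH (m+2))).eval x = 2*((m:ℝ)+2) * (pH (m+1)).eval x := by
      rw [derivative_pH (m+1)]; simp only [eval_mul, eval_C]; push_cast; ring
    rw [hd]
    have r1 := pH_mulX m x
    have r2 := pH_mulX (m+1) x
    have r3 := pH_mulX (m+2) x
    have hc : (((m+2)*(m+2-1) : ℕ) : ℝ) = ((m:ℝ)+2)*((m:ℝ)+1) := by push_cast; ring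
    rw [show (m+2-2 : ℕ) = m from rfl, hc]
    push_cast at r2 r3 ⊢
    linear_combination ((m:ℝ)+2) * r1 - x * r2 - (1/2) * r3

/-- The Gaussian derivative formula. -/
lemma iteratedDeriv_gauss (k : ℕ) :
    iteratedDeriv k (fun y => Real.exp (-y ^ 2)) = fun x =>
      (-1) ^ k * (pH k).eval x * Real.exp (-x ^ 2) := by
  induction k with
  | zero => funext x; simp [pH]
  | succ n ih =>
    rw [iteratedDeriv_succ, ih]
    funext x
    have hexp : HasDerivAt (fun x : ℝ => Real.exp (-x ^ 2)) ((-(2*x)) * Real.exp (-x ^ 2)) x := by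
      have h1 : HasDerivAt (fun x : ℝ => -x ^ 2) (-(2*x)) x := by
        simpa using ((hasDerivAt_pow 2 x).fun_neg)
      simpa [mul_comm] using h1.exp
    have hpoly : HasDerivAt (fun x : ℝ => (-1 : ℝ) ^ n * (pH n).eval x)
        ((-1 : ℝ) ^ n * (derivative (pH n)).eval x) x :=
      ((pH n).hasDerivAt x).const_mul _
    have := (hpoly.fun_mul hexp)
    rw [this.deriv]
    rw [pH_succ n]
    simp only [eval_sub, eval_mul, eval_C, eval_X]
    ring

lemma physHermite_eq_s19 (k : ℕ) (x : ℝ) : physHermite k x = (pH k).eval x := by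
  rw [physHermite, iteratedDeriv_gauss]
  have h1 : Real.exp (x ^ 2) * Real.exp (-x ^ 2) = 1 := by
    rw [← Real.exp_add]; simp
  have h2 : ((-1 : ℝ) ^ k) * ((-1 : ℝ) ^ k) = 1 := by
    rw [← pow_add, Even.neg_one_pow ⟨k, by ring⟩]
  calc (-1:ℝ) ^ k * Real.exp (x ^ 2) * ((-1) ^ k * (pH k).eval x * Real.exp (-x ^ 2))
      = (((-1:ℝ) ^ k) * ((-1:ℝ) ^ k)) * (Real.exp (x ^ 2) * Real.exp (-x ^ 2)) * (pH k).eval x := by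
        ring
    _ = (pH k).eval x := by rw [h1, h2]; ring

lemma swHermite_eq (k : ℕ) (b v : ℝ) :
    swHermite k b v = Real.sqrt b * Real.pi ^ (-(1 : ℝ) / 4) *
      (Real.sqrt (2 ^ k * (Nat.factorial k)))⁻¹ *
      (pH k).eval (b * v) * Real.exp (-(b ^ 2 * v ^ 2) / 2) := by
  rw [swHermite, physHermite_eq_s19]

lemma sq_fac (m : ℕ) : Real.sqrt (2^(m+2) * ((m+2).factorial : ℝ))
    = 2 * Real.sqrt (((m:ℝ)+1)*((m:ℝ)+2)) * Real.sqrt (2^m * (m.factorial : ℝ)) := by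
  have h : (2:ℝ)^(m+2) * ((m+2).factorial : ℝ)
      = (4*((((m:ℝ))+1)*(((m:ℝ))+2))) * (2^m * (m.factorial : ℝ)) := by
    rw [Nat.factorial_succ, Nat.factorial_succ]
    push_cast
    ring
  rw [h, Real.sqrt_mul (by positivity), Real.sqrt_mul (by norm_num : (0:ℝ) ≤ 4),
    show (4:ℝ) = 2^2 by norm_num, Real.sqrt_sq (by norm_num : (0:ℝ) ≤ 2)]

lemma coeff_left (k : ℕ) : ((k*(k-1):ℕ):ℝ) * (Real.sqrt (2^k * (k.factorial : ℝ)))⁻¹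
    = Real.sqrt ((k:ℝ)*((k:ℝ)-1))/2 * (Real.sqrt (2^(k-2) * ((k-2).factorial : ℝ)))⁻¹ := by
  match k with
  | 0 => norm_num
  | 1 => norm_num
  | (m+2) =>
    rw [sq_fac m]
    have harg : ((m+2:ℕ):ℝ) * (((m+2:ℕ):ℝ) - 1) = ((m:ℝ)+1)*((m:ℝ)+2) := by push_cast; ring
    rw [show ((m+2)-2 : ℕ) = m from rfl, harg]
    set q := Real.sqrt (((m:ℝ)+1)*((m:ℝ)+2)) with hqdef
    set t := Real.sqrt (2^m * (m.factorial : ℝ)) with htdef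
    have hqq : q*q = ((m:ℝ)+1)*((m:ℝ)+2) := Real.mul_self_sqrt (by positivity)
    have hq : 0 < q := Real.sqrt_pos.mpr (by positivity)
    have ht : 0 < t := Real.sqrt_pos.mpr (by positivity)
    have hc : (((m+2)*((m+2)-1):ℕ):ℝ) = ((m:ℝ)+1)*((m:ℝ)+2) := by push_cast; ring
    rw [hc, ← hqq]
    field_simp

lemma coeff_right (k : ℕ) : (1/4 : ℝ) * (Real.sqrt (2^k * (k.factorial : ℝ)))⁻¹
    = Real.sqrt (((k:ℝ)+1)*((k:ℝ)+2))/2 * (Real.sqrt (2^(k+2) * ((k+2).factorial : ℝ)))⁻¹ := by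
  rw [sq_fac k]
  set q := Real.sqrt (((k:ℝ)+1)*((k:ℝ)+2)) with hqdef
  set t := Real.sqrt (2^k * (k.factorial : ℝ)) with htdef
  have hqq : q*q = ((k:ℝ)+1)*((k:ℝ)+2) := Real.mul_self_sqrt (by positivity)
  have hq : 0 < q := Real.sqrt_pos.mpr (by positivity)
  have ht : 0 < t := Real.sqrt_pos.mpr (by positivity)
  field_simp
  ring

lemma hasDerivAt_swHermite (k : ℕ) (v : ℝ) {b : ℝ} (hb : 0 < b) :
    HasDerivAt (fun b => swHermite k b v)
      ((Real.sqrt ((k:ℝ)*((k:ℝ)-1))/2 * swHermite (k-2) b v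
        - Real.sqrt (((k:ℝ)+1)*((k:ℝ)+2))/2 * swHermite (k+2) b v) / b) b := by
  have hb0 : b ≠ 0 := hb.ne'
  set cp : ℝ := Real.pi ^ (-(1:ℝ)/4) with hcp
  set dk : ℝ := (Real.sqrt (2^k * (k.factorial : ℝ)))⁻¹ with hdk
  have h1 : HasDerivAt Real.sqrt (1/(2*Real.sqrt b)) b := Real.hasDerivAt_sqrt hb0
  have h2 : HasDerivAt (fun b : ℝ => (pH k).eval (b*v))
      ((derivative (pH k)).eval (b*v) * v) b := by
    have := ((pH k).hasDerivAt (b*v)).comp b (hasDerivAt_mul_const v)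
    simpa [Function.comp_def] using this
  have h3 : HasDerivAt (fun b : ℝ => Real.exp (-(b^2*v^2)/2))
      ((-(b*v^2)) * Real.exp (-(b^2*v^2)/2)) b := by
    have hi : HasDerivAt (fun b : ℝ => -(b^2*v^2)/2) (-(b*v^2)) b := by
      have h := ((hasDerivAt_pow 2 b).mul_const (v^2)).fun_neg.div_const 2
      refine h.congr_deriv (Eq.symm ?_)
      ring
    simpa [mul_comm] using hi.exp
  have raw := (((h1.mul_const cp).mul_const dk).fun_mul h2).fun_mul h3
  have hfun : (fun b => Real.sqrt b * cp * dk * (pH k).eval (b*v) * Real.exp (-(b^2*v^2)/2))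
      = fun b => swHermite k b v := by
    funext b; rw [swHermite_eq]
  rw [hfun] at raw
  refine raw.congr_deriv (Eq.symm ?_)
  rw [swHermite_eq, swHermite_eq]
  have key := pH_key k (b*v)
  have cl := coeff_left k
  have cr := coeff_right k
  have hsq : Real.sqrt b * Real.sqrt b = b := Real.mul_self_sqrt hb.le
  have hs0 : Real.sqrt b ≠ 0 := by positivity
  set s := Real.sqrt b with hs
  set e := Real.exp (-(b^2*v^2)/2) with he
  set A := (pH k).eval (b*v) with hA
  set A' := (derivative (pH k)).eval (b*v) with hA'
  set Am := (pH (k-2)).eval (b*v) with hAm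
  set Ap := (pH (k+2)).eval (b*v) with hAp
  set dm : ℝ := (Real.sqrt (2^(k-2) * ((k-2).factorial : ℝ)))⁻¹ with hdm
  set dp : ℝ := (Real.sqrt (2^(k+2) * ((k+2).factorial : ℝ)))⁻¹ with hdp
  set c1 : ℝ := Real.sqrt ((k:ℝ)*((k:ℝ)-1)) with hc1
  set c2 : ℝ := Real.sqrt (((k:ℝ)+1)*((k:ℝ)+2)) with hc2
  have hbs : b = s * s := hsq.symm
  rw [hbs] at key ⊢
  rw [← hdk] at cl cr
  rw [← hcp]
  field_simp
  linear_combination (-(2*cp*e*Am)) * cl + (2*cp*e*Ap) * cr - (2*cp*dk*e) * key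

lemma integrable_one_add_abs_pow_mul_gauss (n : ℕ) {a : ℝ} (ha : 0 < a) :
    Integrable (fun v : ℝ => (1+|v|)^n * Real.exp (-a * v^2)) := by
  have i1 : Integrable (fun v : ℝ => Real.exp (-a * v^2)) := integrable_exp_neg_mul_sq ha
  have i2 : Integrable (fun v : ℝ => v^(2*n) * Real.exp (-a * v^2)) := by
    have h := integrable_rpow_mul_exp_neg_mul_sq ha
      (s := ((2*n : ℕ) : ℝ)) (lt_of_lt_of_le (by norm_num) (Nat.cast_nonneg _))
    have : (fun v : ℝ => v ^ ((2*n : ℕ) : ℝ) * Real.exp (-a * v^2))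
        = fun v : ℝ => v^(2*n) * Real.exp (-a * v^2) := by
      funext v; rw [Real.rpow_natCast]
    rwa [this] at h
  have hg : Integrable (fun v : ℝ => (4:ℝ)^n * ((1 + v^(2*n)) * Real.exp (-a * v^2))) := by
    refine Integrable.const_mul ?_ _
    have := i1.fun_add i2
    simpa [add_mul] using this
  refine hg.mono' ?_ ?_
  · exact (((continuous_const.add continuous_abs).pow n).mul
      ((continuous_const.mul (continuous_pow 2)).rexp)).aestronglyMeasurable
  · filter_upwards with v
    have hexp : 0 < Real.exp (-a * v^2) := Real.exp_pos _
    have hkey : (1+|v|)^n ≤ (4:ℝ)^n * (1 + v^(2*n)) := by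
      have h1 : (1:ℝ) + |v| ≤ 4 * max 1 (v^2) := by
        rcases le_total (|v|) 1 with h | h
        · have : (1:ℝ) ≤ max 1 (v^2) := le_max_left _ _
          nlinarith
        · have h2 : v^2 ≤ max 1 (v^2) := le_max_right _ _
          have : |v| ≤ v^2 := by nlinarith [sq_abs v]
          nlinarith
      have h2 : (1+|v|)^n ≤ (4 * max 1 (v^2))^n :=
        pow_le_pow_left₀ (by positivity) h1 n
      have h3 : (4 * max 1 (v^2))^n = 4^n * (max 1 (v^2))^n := mul_pow _ _ _
      have h4 : (max 1 (v^2))^n ≤ 1 + v^(2*n) := by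
        rcases le_total (v^2) 1 with h | h
        · rw [max_eq_left h]
          simp only [one_pow]
          have : (0:ℝ) ≤ v^(2*n) := by rw [pow_mul]; positivity
          linarith
        · rw [max_eq_right h, pow_mul]
          have : (0:ℝ) ≤ (v^2)^n := by positivity
          nlinarith [pow_mul v 2 n]
      calc (1+|v|)^n ≤ 4^n * (max 1 (v^2))^n := by rw [← h3]; exact h2
        _ ≤ 4^n * (1 + v^(2*n)) := by
            have : (0:ℝ) ≤ (4:ℝ)^n := by positivity
            nlinarith
    have h0 : (0:ℝ) ≤ (1+|v|)^n := by positivity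
    rw [Real.norm_eq_abs, abs_mul, abs_of_nonneg h0, abs_of_nonneg hexp.le]
    calc (1+|v|)^n * Real.exp (-a * v^2) ≤ ((4:ℝ)^n * (1 + v^(2*n))) * Real.exp (-a * v^2) := by
          exact mul_le_mul_of_nonneg_right hkey hexp.le
      _ = (4:ℝ)^n * ((1 + v^(2*n)) * Real.exp (-a * v^2)) := by ring

lemma poly_abs_bound (Q : Polynomial ℝ) :
    ∃ C : ℝ, 0 ≤ C ∧ ∀ x : ℝ, |Q.eval x| ≤ C * (1+|x|)^(Q.natDegree) := by
  refine ⟨∑ i ∈ Finset.range (Q.natDegree + 1), |Q.coeff i|,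
    Finset.sum_nonneg fun _ _ => abs_nonneg _, fun x => ?_⟩
  rw [Polynomial.eval_eq_sum_range]
  calc |∑ i ∈ Finset.range (Q.natDegree + 1), Q.coeff i * x ^ i|
      ≤ ∑ i ∈ Finset.range (Q.natDegree + 1), |Q.coeff i * x ^ i| := Finset.abs_sum_le_sum_abs _ _
    _ ≤ ∑ i ∈ Finset.range (Q.natDegree + 1), |Q.coeff i| * (1+|x|)^(Q.natDegree) := by
        refine Finset.sum_le_sum fun i hi => ?_
        rw [abs_mul]
        refine mul_le_mul_of_nonneg_left ?_ (abs_nonneg _)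
        rw [abs_pow]
        calc |x|^i ≤ (1+|x|)^i := pow_le_pow_left₀ (abs_nonneg x) (by linarith [abs_nonneg x]) i
          _ ≤ (1+|x|)^(Q.natDegree) := by
              refine pow_le_pow_right₀ (by linarith [abs_nonneg x]) ?_
              exact Nat.lt_succ_iff.mp (Finset.mem_range.mp hi)
    _ = (∑ i ∈ Finset.range (Q.natDegree + 1), |Q.coeff i|) * (1+|x|)^(Q.natDegree) := by
        rw [Finset.sum_mul]

lemma swHermite_abs_bound (k : ℕ) {b₁ b₂ : ℝ} (h1 : 0 < b₁) :
    ∃ C n, 0 ≤ C ∧ ∀ b ∈ Set.Icc b₁ b₂, ∀ v : ℝ,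
      |swHermite k b v| ≤ C * (1+|v|)^n * Real.exp (-(b₁^2/2) * v^2) := by
  obtain ⟨CQ, hCQ0, hCQ⟩ := poly_abs_bound (pH k)
  set n := (pH k).natDegree with hn
  set cp : ℝ := Real.pi ^ (-(1:ℝ)/4) with hcp
  set dk : ℝ := (Real.sqrt (2^k * (k.factorial : ℝ)))⁻¹ with hdk
  have hcp0 : 0 < cp := Real.rpow_pos_of_pos Real.pi_pos _
  have hdk0 : 0 ≤ dk := inv_nonneg.mpr (Real.sqrt_nonneg _)
  refine ⟨Real.sqrt b₂ * cp * dk * (CQ * (1+|b₂|)^n), n, ?_, ?_⟩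
  · have h4 : (0:ℝ) ≤ CQ * (1+|b₂|)^n := mul_nonneg hCQ0 (by positivity)
    have := mul_nonneg (mul_nonneg (mul_nonneg (Real.sqrt_nonneg b₂) hcp0.le) hdk0) h4
    exact this
  · intro b hb v
    have hbpos : 0 < b := lt_of_lt_of_le h1 hb.1
    have habs : |swHermite k b v|
        = Real.sqrt b * cp * dk * |(pH k).eval (b*v)| * Real.exp (-(b^2*v^2)/2) := by
      rw [swHermite_eq]
      rw [abs_mul, abs_mul, abs_mul, abs_mul, abs_of_nonneg (Real.sqrt_nonneg b),
        abs_of_nonneg hcp0.le, abs_of_nonneg hdk0, abs_of_nonneg (Real.exp_pos _).le]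
    rw [habs]
    have hev : |(pH k).eval (b*v)| ≤ CQ * ((1+|b₂|)^n * (1+|v|)^n) := by
      calc |(pH k).eval (b*v)| ≤ CQ * (1+|b*v|)^n := hCQ (b*v)
        _ ≤ CQ * ((1+|b₂|)^n * (1+|v|)^n) := by
            refine mul_le_mul_of_nonneg_left ?_ hCQ0
            rw [← mul_pow]
            refine pow_le_pow_left₀ (by positivity) ?_ n
            rw [abs_mul]
            have h1 : |b| ≤ |b₂| := by
              rw [abs_of_pos hbpos]
              exact le_trans hb.2 (le_abs_self _)
            nlinarith [abs_nonneg v, abs_nonneg b, abs_nonneg b₂]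
    have hexp : Real.exp (-(b^2*v^2)/2) ≤ Real.exp (-(b₁^2/2) * v^2) := by
      rw [Real.exp_le_exp]
      have hbb : b₁^2 ≤ b^2 := by nlinarith [hb.1, h1]
      nlinarith [mul_le_mul_of_nonneg_right hbb (sq_nonneg v)]
    have hs : Real.sqrt b ≤ Real.sqrt b₂ := Real.sqrt_le_sqrt hb.2
    calc Real.sqrt b * cp * dk * |(pH k).eval (b*v)| * Real.exp (-(b^2*v^2)/2)
        ≤ Real.sqrt b₂ * cp * dk * (CQ * ((1+|b₂|)^n * (1+|v|)^n))
            * Real.exp (-(b₁^2/2) * v^2) := by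
          gcongr
      _ = Real.sqrt b₂ * cp * dk * (CQ * (1+|b₂|)^n) * (1+|v|)^n
            * Real.exp (-(b₁^2/2) * v^2) := by ring

lemma f_abs_bound (M : ℕ) {β : ℝ} (hβ : 0 < β) (c : ℕ → ℝ) :
    ∃ Cf nf, 0 ≤ Cf ∧ ∀ v : ℝ,
      |∑ k ∈ Finset.range (M+1), c k * swHermite k β v|
        ≤ Cf * (1+|v|)^nf * Real.exp (-(β^2/2) * v^2) := by
  have H : ∀ k : ℕ, ∃ C n, 0 ≤ C ∧ ∀ b ∈ Set.Icc β β, ∀ v : ℝ,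
      |swHermite k b v| ≤ C * (1+|v|)^n * Real.exp (-(β^2/2) * v^2) :=
    fun k => swHermite_abs_bound k hβ
  choose C n hC0 hCb using H
  refine ⟨∑ k ∈ Finset.range (M+1), |c k| * C k, (Finset.range (M+1)).sup n,
    Finset.sum_nonneg fun k _ => mul_nonneg (abs_nonneg _) (hC0 k), fun v => ?_⟩
  have hv1 : (1:ℝ) ≤ 1 + |v| := by linarith [abs_nonneg v]
  calc |∑ k ∈ Finset.range (M+1), c k * swHermite k β v|
      ≤ ∑ k ∈ Finset.range (M+1), |c k * swHermite k β v| := Finset.abs_sum_le_sum_abs _ _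
    _ ≤ ∑ k ∈ Finset.range (M+1),
        |c k| * (C k * (1+|v|)^((Finset.range (M+1)).sup n) * Real.exp (-(β^2/2) * v^2)) := by
        refine Finset.sum_le_sum fun k hk => ?_
        rw [abs_mul]
        refine mul_le_mul_of_nonneg_left ?_ (abs_nonneg _)
        calc |swHermite k β v| ≤ C k * (1+|v|)^(n k) * Real.exp (-(β^2/2) * v^2) :=
              hCb k β ⟨le_refl β, le_refl β⟩ v
          _ ≤ C k * (1+|v|)^((Finset.range (M+1)).sup n) * Real.exp (-(β^2/2) * v^2) := by
              refine mul_le_mul_of_nonneg_right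
                (mul_le_mul_of_nonneg_left
                  (pow_le_pow_right₀ hv1 (Finset.le_sup hk)) (hC0 k)) (Real.exp_pos _).le
    _ = (∑ k ∈ Finset.range (M+1), |c k| * C k) * (1+|v|)^((Finset.range (M+1)).sup n)
          * Real.exp (-(β^2/2) * v^2) := by
        rw [Finset.sum_mul, Finset.sum_mul]
        refine Finset.sum_congr rfl fun k _ => by ring

lemma continuous_swHermite (k : ℕ) (b : ℝ) : Continuous (fun v => swHermite k b v) := by
  have h : (fun v => swHermite k b v) = fun v =>
      Real.sqrt b * Real.pi ^ (-(1 : ℝ) / 4) * (Real.sqrt (2 ^ k * (Nat.factorial k)))⁻¹ *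
      (pH k).eval (b * v) * Real.exp (-(b ^ 2 * v ^ 2) / 2) :=
    funext fun v => swHermite_eq k b v
  rw [h]
  exact (continuous_const.mul ((pH k).continuous.comp (continuous_const.mul continuous_id))).mul
    (Real.continuous_exp.comp (((continuous_const.mul (continuous_pow 2))).neg.div_const 2))

lemma integrable_swHermite_mul_f (k M : ℕ) {b β : ℝ} (hb : 0 < b) (hβ : 0 < β) (c : ℕ → ℝ) :
    Integrable (fun v : ℝ =>
      swHermite k b v * (∑ j ∈ Finset.range (M+1), c j * swHermite j β v)) := by
  obtain ⟨C, n, hC0, hC⟩ := swHermite_abs_bound k (b₁ := b) (b₂ := b) hb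
  obtain ⟨Cf, nf, hCf0, hCf⟩ := f_abs_bound M hβ c
  have hint := (integrable_one_add_abs_pow_mul_gauss (n+nf)
    (a := b^2/2 + β^2/2) (by positivity)).const_mul (C*Cf)
  refine hint.mono' ?_ ?_
  · exact ((continuous_swHermite k b).mul (continuous_finset_sum _ fun j _ =>
      continuous_const.mul (continuous_swHermite j β))).aestronglyMeasurable
  · filter_upwards with v
    rw [Real.norm_eq_abs, abs_mul]
    have h1 := hC b ⟨le_refl b, le_refl b⟩ v
    have h2 := hCf v
    have hee : Real.exp (-(b^2/2)*v^2) * Real.exp (-(β^2/2)*v^2)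
        = Real.exp (-(b^2/2 + β^2/2)*v^2) := by
      rw [← Real.exp_add]; congr 1; ring
    calc |swHermite k b v| * |∑ j ∈ Finset.range (M+1), c j * swHermite j β v|
        ≤ (C * (1+|v|)^n * Real.exp (-(b^2/2) * v^2))
          * (Cf * (1+|v|)^nf * Real.exp (-(β^2/2) * v^2)) :=
          mul_le_mul h1 h2 (abs_nonneg _) (by positivity)
      _ = C*Cf * ((1+|v|)^(n+nf) * Real.exp (-(b^2/2 + β^2/2) * v^2)) := by
          rw [pow_add]
          linear_combination (C * Cf * (1+|v|)^n * (1+|v|)^nf) * hee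

/-- ODE for the intermediate coefficients `h_l(s) = ∫ H_l^{b(s)}(v) f(v) dv`,
`b(s) = β (β'/β)^s`, where `f` is a finite SW Hermite expansion. Negative-index
terms are absent since their coefficients `√(l(l-1))` vanish for `l < 2`. -/
theorem swHermite_projection_ODE (M : ℕ) (β β' : ℝ) (hβ : 0 < β) (hβ' : 0 < β')
    (c : ℕ → ℝ) (l : ℕ) (s : ℝ) :
    HasDerivAt
      (fun s : ℝ => ∫ v : ℝ, swHermite l (β * (β' / β) ^ s) v *
        (∑ k ∈ Finset.range (M + 1), c k * swHermite k β v))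
      (Real.log (β' / β) / 2 *
        (Real.sqrt ((l : ℝ) * ((l : ℝ) - 1)) *
            (∫ v : ℝ, swHermite (l - 2) (β * (β' / β) ^ s) v *
              (∑ k ∈ Finset.range (M + 1), c k * swHermite k β v)) -
          Real.sqrt (((l : ℝ) + 1) * ((l : ℝ) + 2)) *
            (∫ v : ℝ, swHermite (l + 2) (β * (β' / β) ^ s) v *
              (∑ k ∈ Finset.range (M + 1), c k * swHermite k β v)))) s := by
  set r := β' / β with hrdef
  have hr : 0 < r := div_pos hβ' hβ
  set L := Real.log r with hLdef
  have hrw : ∀ u : ℝ, r ^ u = Real.exp (L * u) := fun u => Real.rpow_def_of_pos hr u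
  simp only [hrw]
  set c1 := Real.sqrt ((l : ℝ) * ((l : ℝ) - 1)) with hc1def
  set c2 := Real.sqrt (((l : ℝ) + 1) * ((l : ℝ) + 2)) with hc2def
  have hc10 : 0 ≤ c1 := Real.sqrt_nonneg _
  have hc20 : 0 ≤ c2 := Real.sqrt_nonneg _
  have hbpos : ∀ u : ℝ, 0 < β * Real.exp (L * u) := fun u => by positivity
  have hbder : ∀ u : ℝ, HasDerivAt (fun u : ℝ => β * Real.exp (L * u))
      (β * Real.exp (L * u) * L) u := by
    intro u
    have h1 : HasDerivAt (fun u : ℝ => L * u) L u := by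
      simpa using (hasDerivAt_id u).const_mul L
    have := h1.exp.const_mul β
    refine this.congr_deriv (Eq.symm ?_)
    ring
  set b₁ := β * Real.exp (L * s - |L|) with hb1def
  set b₂ := β * Real.exp (L * s + |L|) with hb2def
  have hb1pos : 0 < b₁ := by positivity
  have hmem : ∀ u ∈ Metric.ball s 1, β * Real.exp (L * u) ∈ Set.Icc b₁ b₂ := by
    intro u hu
    rw [Metric.mem_ball, Real.dist_eq] at hu
    have habs : |L * u - L * s| ≤ |L| := by
      rw [← mul_sub, abs_mul]
      calc |L| * |u - s| ≤ |L| * 1 := mul_le_mul_of_nonneg_left hu.le (abs_nonneg _)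
        _ = |L| := mul_one _
    have h := abs_le.mp habs
    constructor
    · exact mul_le_mul_of_nonneg_left (Real.exp_le_exp.mpr (by linarith [h.1])) hβ.le
    · exact mul_le_mul_of_nonneg_left (Real.exp_le_exp.mpr (by linarith [h.2])) hβ.le
  obtain ⟨C1, n1, hC10, hC1⟩ := swHermite_abs_bound (l-2) (b₁ := b₁) (b₂ := b₂) hb1pos
  obtain ⟨C2, n2, hC20, hC2⟩ := swHermite_abs_bound (l+2) (b₁ := b₁) (b₂ := b₂) hb1pos
  obtain ⟨Cf, nf, hCf0, hCf⟩ := f_abs_bound M hβ c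
  have hfcont : Continuous (fun v : ℝ => ∑ k ∈ Finset.range (M+1), c k * swHermite k β v) :=
    continuous_finset_sum _ fun j _ => continuous_const.mul (continuous_swHermite j β)
  have main := hasDerivAt_integral_of_dominated_loc_of_deriv_le (μ := MeasureTheory.volume)
    (x₀ := s) (s := Metric.ball s 1)
    (F := fun u v => swHermite l (β * Real.exp (L * u)) v *
      (∑ k ∈ Finset.range (M + 1), c k * swHermite k β v))
    (F' := fun u v => L / 2 * (c1 * swHermite (l-2) (β * Real.exp (L * u)) v
      - c2 * swHermite (l+2) (β * Real.exp (L * u)) v) *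
      (∑ k ∈ Finset.range (M + 1), c k * swHermite k β v))
    (bound := fun v => (|L|/2 * (c1*C1 + c2*C2) * Cf) *
      ((1+|v|)^(max n1 n2 + nf) * Real.exp (-(b₁^2/2 + β^2/2) * v^2)))
    (Metric.ball_mem_nhds s one_pos)
    (Filter.Eventually.of_forall fun u =>
      (((continuous_swHermite l _).mul hfcont).aestronglyMeasurable))
    (integrable_swHermite_mul_f l M (hbpos s) hβ c)
    (((continuous_const.mul ((continuous_const.mul (continuous_swHermite (l-2) _)).sub
      (continuous_const.mul (continuous_swHermite (l+2) _)))).mul hfcont).aestronglyMeasurable)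
    ?_ ?_ ?_
  · obtain ⟨-, hder⟩ := main
    refine hder.congr_deriv (Eq.symm ?_)
    have e1 := integrable_swHermite_mul_f (l-2) M (hbpos s) hβ c
    have e2 := integrable_swHermite_mul_f (l+2) M (hbpos s) hβ c
    have hsplit : (fun v : ℝ => L / 2 * (c1 * swHermite (l-2) (β * Real.exp (L * s)) v
        - c2 * swHermite (l+2) (β * Real.exp (L * s)) v) *
        (∑ k ∈ Finset.range (M + 1), c k * swHermite k β v))
        = fun v : ℝ => L / 2 * (c1 * (swHermite (l-2) (β * Real.exp (L * s)) v *
          (∑ k ∈ Finset.range (M + 1), c k * swHermite k β v))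
        - c2 * (swHermite (l+2) (β * Real.exp (L * s)) v *
          (∑ k ∈ Finset.range (M + 1), c k * swHermite k β v))) := by
      funext v; ring
    rw [hsplit, MeasureTheory.integral_const_mul,
      MeasureTheory.integral_sub (e1.const_mul c1) (e2.const_mul c2),
      MeasureTheory.integral_const_mul, MeasureTheory.integral_const_mul]
  · -- h_bound
    filter_upwards with v
    intro u hu
    have h1 := hC1 _ (hmem u hu) v
    have h2 := hC2 _ (hmem u hu) v
    have h3 := hCf v
    have hv1 : (1:ℝ) ≤ 1 + |v| := by linarith [abs_nonneg v]
    have hmax : ∀ m : ℕ, m ≤ max n1 n2 →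
        (1+|v|)^m ≤ (1+|v|)^(max n1 n2) := fun m hm => pow_le_pow_right₀ hv1 hm
    have h1' : |swHermite (l-2) (β * Real.exp (L * u)) v|
        ≤ C1 * (1+|v|)^(max n1 n2) * Real.exp (-(b₁^2/2) * v^2) := by
      refine le_trans h1 ?_
      exact mul_le_mul_of_nonneg_right (mul_le_mul_of_nonneg_left
        (hmax n1 (le_max_left _ _)) hC10) (Real.exp_pos _).le
    have h2' : |swHermite (l+2) (β * Real.exp (L * u)) v|
        ≤ C2 * (1+|v|)^(max n1 n2) * Real.exp (-(b₁^2/2) * v^2) := by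
      refine le_trans h2 ?_
      exact mul_le_mul_of_nonneg_right (mul_le_mul_of_nonneg_left
        (hmax n2 (le_max_right _ _)) hC20) (Real.exp_pos _).le
    have hee : Real.exp (-(b₁^2/2)*v^2) * Real.exp (-(β^2/2)*v^2)
        = Real.exp (-(b₁^2/2 + β^2/2)*v^2) := by
      rw [← Real.exp_add]; congr 1; ring
    rw [Real.norm_eq_abs, abs_mul, abs_mul]
    have hdiff : |c1 * swHermite (l-2) (β * Real.exp (L * u)) v
        - c2 * swHermite (l+2) (β * Real.exp (L * u)) v|
        ≤ (c1*C1 + c2*C2) * (1+|v|)^(max n1 n2) * Real.exp (-(b₁^2/2) * v^2) := by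
      calc |c1 * swHermite (l-2) (β * Real.exp (L * u)) v
          - c2 * swHermite (l+2) (β * Real.exp (L * u)) v|
          ≤ |c1 * swHermite (l-2) (β * Real.exp (L * u)) v|
            + |c2 * swHermite (l+2) (β * Real.exp (L * u)) v| := abs_sub _ _
        _ ≤ c1 * (C1 * (1+|v|)^(max n1 n2) * Real.exp (-(b₁^2/2) * v^2))
            + c2 * (C2 * (1+|v|)^(max n1 n2) * Real.exp (-(b₁^2/2) * v^2)) := by
            rw [abs_mul, abs_mul, abs_of_nonneg hc10, abs_of_nonneg hc20]
            exact add_le_add (mul_le_mul_of_nonneg_left h1' hc10)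
              (mul_le_mul_of_nonneg_left h2' hc20)
        _ = (c1*C1 + c2*C2) * (1+|v|)^(max n1 n2) * Real.exp (-(b₁^2/2) * v^2) := by ring
    have hL2 : |L/2| = |L|/2 := by rw [abs_div]; norm_num
    calc |L/2| * |c1 * swHermite (l-2) (β * Real.exp (L * u)) v
          - c2 * swHermite (l+2) (β * Real.exp (L * u)) v|
          * |∑ k ∈ Finset.range (M + 1), c k * swHermite k β v|
        ≤ (|L|/2) * ((c1*C1 + c2*C2) * (1+|v|)^(max n1 n2) * Real.exp (-(b₁^2/2) * v^2))
          * (Cf * (1+|v|)^nf * Real.exp (-(β^2/2) * v^2)) := by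
          rw [hL2]
          exact mul_le_mul (mul_le_mul le_rfl hdiff (abs_nonneg _) (by positivity))
            h3 (abs_nonneg _) (by positivity)
      _ = (|L|/2 * (c1*C1 + c2*C2) * Cf) *
          ((1+|v|)^(max n1 n2 + nf) * Real.exp (-(b₁^2/2 + β^2/2) * v^2)) := by
          rw [pow_add]
          linear_combination (|L|/2 * (c1*C1 + c2*C2) * Cf
            * (1+|v|)^(max n1 n2) * (1+|v|)^nf) * hee
  · -- bound integrable
    exact (integrable_one_add_abs_pow_mul_gauss (max n1 n2 + nf)
      (a := b₁^2/2 + β^2/2) (by positivity)).const_mul _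
  · -- h_diff
    filter_upwards with v
    intro u hu
    have hd := HasDerivAt.comp u (hasDerivAt_swHermite l v (hbpos u)) (hbder u)
    simp only [Function.comp_def] at hd
    have hd2 := hd.mul_const (∑ k ∈ Finset.range (M + 1), c k * swHermite k β v)
    refine hd2.congr_deriv (Eq.symm ?_)
    have hbne : β * Real.exp (L * u) ≠ 0 := (hbpos u).ne'
    rw [← hc1def, ← hc2def]
    field_simp
end
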